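/- arXiv:0705.4058 — 6 statements merged into one kernel-verified Lean document; each statement's English description precedes it below -/
import Mathlib

section
/- There exists σ > 0 such that π² ( h(x)⁻² − M⁻² ) ≥ σ |x|^m for all x ∈ I; consequently W_ε(x) ≥ σ ε⁻² |x|^m for all ε > 0 and all x ∈ I \ {0}. -/
/-!
Near `0` the expansion of `h` gives `M - h x ≥ (min c₊ c₋ / 2) |x|^m`, and
`h⁻² - M⁻² ≥ (M - h) / M³` turns this into the bound. Away from `0`, i.e. for `|x| ≥ δ`, the
gap `h⁻² - M⁻²` is continuous and positive on a compact set, so it dominates a multiple of the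
bounded function `|x|^m`. The bound on `W_ε` follows by dividing by `ε²` and dropping `v ≥ 0`.
-/

open MeasureTheory Real Set

lemma div_cube_le_inv_sq_sub_inv_sq {y M : ℝ} (hy : 0 < y) (hyM : y ≤ M) :
    (M - y) / M ^ 3 ≤ (y ^ 2)⁻¹ - (M ^ 2)⁻¹ := by
  have hM : 0 < M := hy.trans_le hyM
  have key : (y ^ 2)⁻¹ - (M ^ 2)⁻¹ = (M ^ 2 - y ^ 2) / (y ^ 2 * M ^ 2) := by
    field_simp
  rw [key, div_le_div_iff₀ (by positivity) (by positivity)]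
  nlinarith [mul_nonneg (sub_nonneg.2 hyM) (mul_pos hy hM).le,
    mul_nonneg (sub_nonneg.2 hyM) (mul_pos hM hM).le, sq_nonneg (M - y),
    mul_pos hy hM, mul_pos (mul_pos hy hy) hM]

lemma half_mul_rpow_le_sub_of_abs_sub_le {y M c K t m : ℝ} (ht : 0 < t) (hKt : K * t ≤ c / 2)
    (H : |y - (M - c * t ^ m)| ≤ K * t ^ (m + 1)) : c / 2 * t ^ m ≤ M - y := by
  have herr : K * t ^ (m + 1) ≤ c / 2 * t ^ m := by
    rw [rpow_add ht, rpow_one, mul_comm (t ^ m), ← mul_assoc]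
    exact mul_le_mul_of_nonneg_right hKt (rpow_pos_of_pos ht m).le
  linarith [(abs_le.1 H).2]

lemma exists_mul_rpow_le_sub_of_expansion {h : ℝ → ℝ} {m cp cm K η : ℝ}
    (hcp : 0 < cp) (hcm : 0 < cm) (hK : 0 < K) (hη : 0 < η)
    (hexp_pos : ∀ x : ℝ, 0 < x → x ≤ η → |h x - (h 0 - cp * x ^ m)| ≤ K * x ^ (m + 1))
    (hexp_neg : ∀ x : ℝ, -η ≤ x → x < 0 →
      |h x - (h 0 - cm * |x| ^ m)| ≤ K * |x| ^ (m + 1)) :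
    ∃ δ > 0, ∀ x : ℝ, x ≠ 0 → |x| ≤ δ → min cp cm / 2 * |x| ^ m ≤ h 0 - h x := by
  set c := min cp cm
  refine ⟨min η (c / (2 * K)), by positivity, fun x hx0 hxδ => ?_⟩
  have hxη : |x| ≤ η := hxδ.trans (min_le_left _ _)
  have hKx : K * |x| ≤ c / 2 := by
    have := hxδ.trans (min_le_right _ _)
    rw [le_div_iff₀ (by positivity)] at this
    linarith
  have hxm : 0 ≤ |x| ^ m := rpow_nonneg (abs_nonneg x) m
  rcases hx0.lt_or_gt with hneg | hpos
  · have := half_mul_rpow_le_sub_of_abs_sub_le (abs_pos.2 hx0)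
      (hKx.trans (by gcongr; exact min_le_right _ _))
      (hexp_neg x (neg_le_of_abs_le hxη) hneg)
    nlinarith [min_le_right cp cm]
  · rw [abs_of_pos hpos] at hxη hKx hxm ⊢
    have := half_mul_rpow_le_sub_of_abs_sub_le hpos
      (hKx.trans (by gcongr; exact min_le_left _ _)) (hexp_pos x hpos hxη)
    nlinarith [min_le_left cp cm]

lemma IsCompact.exists_pos_mul_le {X : Type*} [TopologicalSpace X] {S : Set X} {f g : X → ℝ}
    (hS : IsCompact S) (hf : ContinuousOn f S) (hg : ContinuousOn g S)
    (hgpos : ∀ x ∈ S, 0 < g x) : ∃ σ > 0, ∀ x ∈ S, σ * f x ≤ g x := by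
  obtain ⟨C, hC⟩ := hS.bddAbove_image (hf.div hg fun x hx => (hgpos x hx).ne')
  refine ⟨(max C 1)⁻¹, by positivity, fun x hx => ?_⟩
  have hfg : f x / g x ≤ max C 1 := (hC ⟨x, hx, rfl⟩).trans (le_max_left _ _)
  rw [div_le_iff₀ (hgpos x hx)] at hfg
  rw [inv_mul_le_iff₀ (by positivity)]
  exact hfg

lemma exists_pos_mul_rpow_le_inv_sq_sub_inv_sq_of_le_abs {s : Set ℝ} {δ m : ℝ} {h : ℝ → ℝ}
    (hs : IsCompact s) (hcont : ContinuousOn h s) (hpos : ∀ x ∈ s, 0 < h x)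
    (hmax : ∀ x ∈ s, x ≠ 0 → h x < h 0) (hδ : 0 < δ) :
    ∃ σ > 0, ∀ x ∈ s ∩ {x | δ ≤ |x|},
      σ * |x| ^ m ≤ ((h x) ^ 2)⁻¹ - ((h 0) ^ 2)⁻¹ := by
  have hx0 : ∀ x ∈ s ∩ {x | δ ≤ |x|}, x ≠ 0 := fun x hx hx0 => by
    have : δ ≤ |x| := hx.2
    rw [hx0, abs_zero] at this
    linarith
  refine (hs.inter_right (isClosed_le continuous_const continuous_abs)).exists_pos_mul_le
    (continuous_abs.continuousOn.rpow_const fun x hx => Or.inl (abs_ne_zero.2 (hx0 x hx)))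
    ((((hcont.mono inter_subset_left).pow 2).inv₀ fun x hx =>
      pow_ne_zero 2 (hpos x hx.1).ne').sub continuousOn_const) fun x hx => ?_
  have hhx := hpos x hx.1
  exact sub_pos.2 (inv_strictAnti₀ (by positivity)
    (pow_lt_pow_left₀ (hmax x hx.1 (hx0 x hx)) hhx.le two_ne_zero))

lemma exists_pos_mul_rpow_le_inv_sq_sub_inv_sq {s : Set ℝ} {h : ℝ → ℝ}
    (hs : IsCompact s) (h0 : (0 : ℝ) ∈ s) (hcont : ContinuousOn h s)
    (hpos : ∀ x ∈ s, 0 < h x) (hmax : ∀ x ∈ s, x ≠ 0 → h x < h 0)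
    {m cp cm K η : ℝ} (hm : m ≠ 0) (hcp : 0 < cp) (hcm : 0 < cm) (hK : 0 < K) (hη : 0 < η)
    (hexp_pos : ∀ x : ℝ, 0 < x → x ≤ η → |h x - (h 0 - cp * x ^ m)| ≤ K * x ^ (m + 1))
    (hexp_neg : ∀ x : ℝ, -η ≤ x → x < 0 →
      |h x - (h 0 - cm * |x| ^ m)| ≤ K * |x| ^ (m + 1)) :
    ∃ σ > 0, ∀ x ∈ s, σ * |x| ^ m ≤ ((h x) ^ 2)⁻¹ - ((h 0) ^ 2)⁻¹ := by
  have hM : 0 < h 0 := hpos 0 h0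
  obtain ⟨δ, hδ, hnear⟩ := exists_mul_rpow_le_sub_of_expansion hcp hcm hK hη hexp_pos hexp_neg
  obtain ⟨σ₂, hσ₂, hσ₂le⟩ :=
    exists_pos_mul_rpow_le_inv_sq_sub_inv_sq_of_le_abs hs hcont hpos hmax hδ
  refine ⟨min (min cp cm / 2 / h 0 ^ 3) σ₂, by positivity, fun x hx => ?_⟩
  rcases eq_or_ne x 0 with rfl | hx0
  · simp [zero_rpow hm]
  have hxm : 0 ≤ |x| ^ m := rpow_nonneg (abs_nonneg x) m
  rcases le_or_gt |x| δ with hxδ | hxδ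
  · calc min (min cp cm / 2 / h 0 ^ 3) σ₂ * |x| ^ m ≤ min cp cm / 2 / h 0 ^ 3 * |x| ^ m := by
          gcongr; exact min_le_left _ _
      _ = min cp cm / 2 * |x| ^ m / h 0 ^ 3 := by ring
      _ ≤ (h 0 - h x) / h 0 ^ 3 := by gcongr; exact hnear x hx0 hxδ
      _ ≤ ((h x) ^ 2)⁻¹ - ((h 0) ^ 2)⁻¹ :=
          div_cube_le_inv_sq_sub_inv_sq (hpos x hx) (hmax x hx hx0).le
  · exact (mul_le_mul_of_nonneg_right (min_le_right _ _) hxm).trans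
      (hσ₂le x ⟨hx, hxδ.le⟩)

theorem potential_lower_bound_sigma_general
    (a b : ℝ) (ha : 0 < a) (hb : 0 < b)
    (h : ℝ → ℝ)
    (hcont : ContinuousOn h (Icc (-a) b))
    (hpos : ∀ x ∈ Icc (-a) b, 0 < h x)
    (hmax : ∀ x ∈ Icc (-a) b, x ≠ 0 → h x < h 0)
    (m cp cm K η : ℝ)
    (hm : 1 ≤ m) (hcp : 0 < cp) (hcm : 0 < cm) (hK : 0 < K) (hη : 0 < η)
    (hexp_pos : ∀ x : ℝ, 0 < x → x ≤ η →
      |h x - (h 0 - cp * x ^ m)| ≤ K * x ^ (m + 1))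
    (hexp_neg : ∀ x : ℝ, -η ≤ x → x < 0 →
      |h x - (h 0 - cm * |x| ^ m)| ≤ K * |x| ^ (m + 1)) :
    ∃ σ : ℝ, 0 < σ ∧
      (∀ x ∈ Icc (-a) b, σ * |x| ^ m ≤ π ^ 2 * (((h x) ^ 2)⁻¹ - ((h 0) ^ 2)⁻¹)) ∧
      (∀ ε : ℝ, 0 < ε → ∀ x ∈ Icc (-a) b \ {(0 : ℝ)},
        σ / ε ^ 2 * |x| ^ m ≤
          π ^ 2 / ε ^ 2 * (((h x) ^ 2)⁻¹ - ((h 0) ^ 2)⁻¹) +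
            (π ^ 2 / 3 + 1 / 4) * (deriv h x) ^ 2 / (h x) ^ 2) := by
  obtain ⟨σ, hσ, hle⟩ := exists_pos_mul_rpow_le_inv_sq_sub_inv_sq isCompact_Icc
    ⟨by linarith, hb.le⟩ hcont hpos hmax (by linarith) hcp hcm hK hη hexp_pos hexp_neg
  have hgap : ∀ x ∈ Icc (-a) b,
      π ^ 2 * σ * |x| ^ m ≤ π ^ 2 * (((h x) ^ 2)⁻¹ - ((h 0) ^ 2)⁻¹) := fun x hx => by
    rw [mul_assoc]
    exact mul_le_mul_of_nonneg_left (hle x hx) (by positivity)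
  refine ⟨π ^ 2 * σ, by positivity, hgap, fun ε hε x hx => ?_⟩
  have hv : 0 ≤ (π ^ 2 / 3 + 1 / 4) * (deriv h x) ^ 2 / (h x) ^ 2 := by positivity
  calc π ^ 2 * σ / ε ^ 2 * |x| ^ m = π ^ 2 * σ * |x| ^ m / ε ^ 2 := by ring
    _ ≤ π ^ 2 * (((h x) ^ 2)⁻¹ - ((h 0) ^ 2)⁻¹) / ε ^ 2 := div_le_div_of_nonneg_right (hgap x hx.1) (by positivity)
    _ = π ^ 2 / ε ^ 2 * (((h x) ^ 2)⁻¹ - ((h 0) ^ 2)⁻¹) := by ring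
    _ ≤ _ := le_add_of_nonneg_right hv

/-- **Estimate (2.3)** (Friedlander–Solomyak). There is `σ > 0` with
`π²(h(x)⁻² − M⁻²) ≥ σ|x|^m` on `I = [-a,b]`; consequently
`W_ε(x) = (π²/ε²)(h(x)⁻² − M⁻²) + v(x) ≥ σ ε⁻² |x|^m` for all `ε > 0` and
`x ∈ I \ {0}` (using `v ≥ 0`). -/
theorem potential_lower_bound_sigma
    (a b : ℝ) (ha : 0 < a) (hb : 0 < b)
    (h : ℝ → ℝ)
    (hcont : ContinuousOn h (Icc (-a) b))
    (hpos : ∀ x ∈ Icc (-a) b, 0 < h x)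
    (hmax : ∀ x ∈ Icc (-a) b, x ≠ 0 → h x < h 0)
    (hC1 : ContDiffOn ℝ 1 h (Icc (-a) b \ {0}))
    (m cp cm K η : ℝ)
    (hm : 1 ≤ m) (hcp : 0 < cp) (hcm : 0 < cm) (hK : 0 < K) (hη : 0 < η)
    (hexp_pos : ∀ x : ℝ, 0 < x → x ≤ η →
      |h x - (h 0 - cp * x ^ m)| ≤ K * x ^ (m + 1))
    (hexp_neg : ∀ x : ℝ, -η ≤ x → x < 0 →
      |h x - (h 0 - cm * |x| ^ m)| ≤ K * |x| ^ (m + 1)) :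
    ∃ σ : ℝ, 0 < σ ∧
      (∀ x ∈ Icc (-a) b, σ * |x| ^ m ≤ π ^ 2 * (((h x) ^ 2)⁻¹ - ((h 0) ^ 2)⁻¹)) ∧
      (∀ ε : ℝ, 0 < ε → ∀ x ∈ Icc (-a) b \ {(0 : ℝ)},
        σ / ε ^ 2 * |x| ^ m ≤
          π ^ 2 / ε ^ 2 * (((h x) ^ 2)⁻¹ - ((h 0) ^ 2)⁻¹) +
            (π ^ 2 / 3 + 1 / 4) * (deriv h x) ^ 2 / (h x) ^ 2) :=
  potential_lower_bound_sigma_general a b ha hb h hcont hpos hmax m cp cm K η hm hcp hcm hK hη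
    hexp_pos hexp_neg
end

section
/- Suppose h is C¹ on all of I with h > 0, and χ ∈ C¹(I) satisfies χ(-a) = χ(b) = 0. Then for every ε > 0 the function ψ_χ(x,y) := χ(x) √(2/(ε h(x))) sin(π y/(ε h(x))) satisfies ∫_{Ω_ε} |∇ψ_χ|² dx dy = ∫_I χ'(x)² dx + ∫_I ( π²/(ε² h(x)²) + v(x) ) χ(x)² dx, where v(x) := (π²/3 + 1/4) h'(x)²/h(x)². -/
open MeasureTheory Real Set

/-- `|∇ψ|² = (∂ₓψ)² + (∂_yψ)²` for a function `ψ : ℝ² → ℝ`. -/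
noncomputable def gradSq (ψ : ℝ × ℝ → ℝ) (p : ℝ × ℝ) : ℝ :=
  (deriv (fun s => ψ (s, p.2)) p.1) ^ 2 + (deriv (fun t => ψ (p.1, t)) p.2) ^ 2

/-!
With `L = ε h`, the transverse factor `√(2/L) sin(πy/L)` has unit `L²`-norm on `(0, L)`. In the
`x`-derivative of `ψ_χ` the width `L` is differentiated as well, which produces the terms
`χ L'/(2L) sin(πy/L)` and `χ (L'/L)(πy/L) cos(πy/L)` next to `χ' sin(πy/L)`. After the
substitution `t = πy/L`, the `y`-integral of `|∇ψ_χ|²` only involves the moments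
`∫₀^π sin² t`, `∫₀^π t sin t cos t`, `∫₀^π t² cos² t` and `∫₀^π cos² t`, and the mixed terms
`χ χ' L'/L` cancel for every fixed `x`. Fubini over the region under the graph of `L` then gives
the identity, with the endpoints of `I` only a null set.
-/

lemma regionBetween_congr {α : Type*} {f f' g g' : α → ℝ} {s : Set α} (hf : EqOn f f' s)
    (hg : EqOn g g' s) : regionBetween f g s = regionBetween f' g' s := by
  ext p
  simp only [regionBetween, mem_ofPred_eq]
  exact and_congr_right fun hp => by rw [hf hp, hg hp]

theorem setIntegral_regionBetween {α E : Type*} [MeasurableSpace α] {μ : Measure α} [SFinite μ]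
    [NormedAddCommGroup E] [NormedSpace ℝ E] {f g : α → ℝ} {s : Set α} (hf : Measurable f)
    (hg : Measurable g) (hs : MeasurableSet s) {F : α × ℝ → E}
    (hF : IntegrableOn F (regionBetween f g s) (μ.prod volume)) :
    ∫ p in regionBetween f g s, F p ∂μ.prod volume
      = ∫ x in s, (∫ y in Ioo (f x) (g x), F (x, y)) ∂μ := by
  have hR := measurableSet_regionBetween hf hg hs
  rw [← integral_indicator hR, integral_prod _ (hF.integrable_indicator hR),
    ← integral_indicator hs]
  congr 1 with x
  by_cases hx : x ∈ s
  · rw [indicator_of_mem hx, ← integral_indicator measurableSet_Ioo]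
    congr 1 with y
    simp only [indicator, regionBetween, mem_ofPred_eq, hx, true_and]
  · simp [indicator, regionBetween, hx]

theorem Continuous.integrableOn_regionBetween_Icc {E : Type*} [NormedAddCommGroup E]
    {F : ℝ × ℝ → E} {f g : ℝ → ℝ} {c d : ℝ} (hF : Continuous F) (hf : ContinuousOn f (Icc c d))
    (hg : ContinuousOn g (Icc c d)) : IntegrableOn F (regionBetween f g (Icc c d)) := by
  obtain ⟨m, hm⟩ := isCompact_Icc.bddBelow_image hf
  obtain ⟨M, hM⟩ := isCompact_Icc.bddAbove_image hg
  refine (hF.continuousOn.integrableOn_compact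
    ((isCompact_Icc (a := c) (b := d)).prod (isCompact_Icc (a := m) (b := M)))).mono_set ?_
  rintro ⟨x, y⟩ ⟨hx, hfy, hgy⟩
  exact ⟨hx, (hm (mem_image_of_mem f hx)).trans hfy.le, hgy.le.trans (hM (mem_image_of_mem g hx))⟩

theorem ContDiffOn.exists_continuous_extension_Icc {f : ℝ → ℝ} {c d : ℝ} (hcd : c < d)
    (hf : ContDiffOn ℝ 1 f (Icc c d)) :
    ∃ g g' : ℝ → ℝ, Continuous g ∧ Continuous g' ∧ (∀ x, g x ∈ f '' Icc c d) ∧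
      EqOn g f (Icc c d) ∧ ∀ x ∈ Ioo c d, HasDerivAt f (g' x) x := by
  refine ⟨IccExtend hcd.le ((Icc c d).domRestrict f),
    IccExtend hcd.le ((Icc c d).domRestrict (derivWithin f (Icc c d))),
    continuous_IccExtend_iff.2 hf.continuousOn.domRestrict,
    continuous_IccExtend_iff.2
      (hf.continuousOn_derivWithin (uniqueDiffOn_Icc hcd) le_rfl).domRestrict,
    fun x => mem_image_of_mem f (projIcc c d hcd.le x).2, fun x hx => IccExtend_of_mem _ _ hx,
    fun x hx => ?_⟩
  rw [IccExtend_of_mem _ _ (Ioo_subset_Icc_self hx)]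
  exact ((hf.differentiableOn one_ne_zero x (Ioo_subset_Icc_self hx)).hasDerivWithinAt).hasDerivAt
    (Icc_mem_nhds hx.1 hx.2)

lemma integral_sin_sub_mul_cos_sq (p q r : ℝ) :
    ∫ t in (0 : ℝ)..π, ((p * sin t - q * t * cos t) ^ 2 + (r * cos t) ^ 2)
      = π / 2 * (p ^ 2 + p * q + (π ^ 2 / 3 + 1 / 2) * q ^ 2 + r ^ 2) := by
  have hsin2 : ∀ t : ℝ, HasDerivAt (fun t => sin (2 * t)) (2 * cos (2 * t)) t := fun t => by
    convert ((hasDerivAt_id' t).const_mul 2).sin using 1; ring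
  have hcos2 : ∀ t : ℝ, HasDerivAt (fun t => cos (2 * t)) (-(2 * sin (2 * t))) t := fun t => by
    convert ((hasDerivAt_id' t).const_mul 2).cos using 1; ring
  have hΦ : ∀ t : ℝ, HasDerivAt
      (fun t => p ^ 2 * (t / 2 - sin (2 * t) / 4) - p * q * (sin (2 * t) / 4 - t * cos (2 * t) / 2)
        + q ^ 2 * (t ^ 3 / 6 + t ^ 2 * sin (2 * t) / 4 + t * cos (2 * t) / 4 - sin (2 * t) / 8)
        + r ^ 2 * (t / 2 + sin (2 * t) / 4))
      ((p * sin t - q * t * cos t) ^ 2 + (r * cos t) ^ 2) t := fun t => by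
    have := ((((((hasDerivAt_id' t).div_const 2).sub ((hsin2 t).div_const 4)).const_mul (p ^ 2)).sub
      ((((hsin2 t).div_const 4).sub (((hasDerivAt_id' t).mul (hcos2 t)).div_const 2)).const_mul
        (p * q))).add
      ((((((hasDerivAt_pow 3 t).div_const 6).add
        (((hasDerivAt_pow 2 t).mul (hsin2 t)).div_const 4)).add
          (((hasDerivAt_id' t).mul (hcos2 t)).div_const 4)).sub
            ((hsin2 t).div_const 8)).const_mul (q ^ 2))).add
      ((((hasDerivAt_id' t).div_const 2).add ((hsin2 t).div_const 4)).const_mul (r ^ 2))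
    refine this.congr_deriv ?_
    rw [sin_two_mul, cos_two_mul]
    push_cast
    linear_combination (-p ^ 2) * sin_sq_add_cos_sq t
  rw [intervalIntegral.integral_eq_sub_of_hasDerivAt (fun t _ => hΦ t)
    ((by fun_prop : Continuous _).intervalIntegrable _ _)]
  simp only [mul_zero, sin_zero, cos_zero, two_mul, sin_add, cos_add, sin_pi, cos_pi]
  ring

noncomputable def transverseMode (u L : ℝ → ℝ) (p : ℝ × ℝ) : ℝ :=
  u p.1 * √(2 / L p.1) * sin (π * p.2 / L p.1)

/-- `|∇ψ|²` at `(x, y)` for `ψ = transverseMode u L`, written with `u, u'` for `u x, u' x` and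
`L, L'` for the width `L x` and its derivative. -/
noncomputable def transverseModeGradSq (u u' L L' y : ℝ) : ℝ :=
  2 / L * (((u' - u * L' / (2 * L)) * sin (π * y / L)
      - u * L' / L * (π * y / L) * cos (π * y / L)) ^ 2 + (u * π / L * cos (π * y / L)) ^ 2)

section TransverseMode

variable {u L : ℝ → ℝ} {u' L' x : ℝ}

lemma HasDerivAt.sqrt_two_div (hL : HasDerivAt L L' x) (hLx : 0 < L x) :
    HasDerivAt (fun s => √(2 / L s)) (-(√(2 / L x) * L' / (2 * L x))) x := by
  have h2L : 0 < 2 / L x := div_pos two_pos hLx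
  refine (((hasDerivAt_const x 2).div hL hLx.ne').sqrt h2L.ne').congr_deriv ?_
  have hsq := sq_sqrt h2L.le
  have hL0 := hLx.ne'
  simp only [Pi.div_apply]
  field_simp
  rw [hsq]
  field_simp
  ring

lemma hasDerivAt_transverseMode_fst (hu : HasDerivAt u u' x) (hL : HasDerivAt L L' x)
    (hLx : 0 < L x) (y : ℝ) :
    HasDerivAt (fun s => transverseMode u L (s, y))
      (√(2 / L x) * ((u' - u x * L' / (2 * L x)) * sin (π * y / L x)
        - u x * L' / L x * (π * y / L x) * cos (π * y / L x))) x := by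
  refine ((hu.mul (hL.sqrt_two_div hLx)).mul
    ((hasDerivAt_const x (π * y)).div hL hLx.ne').sin).congr_deriv ?_
  simp only [Pi.div_apply, Pi.mul_apply]
  field_simp
  ring

lemma hasDerivAt_transverseMode_snd (x y : ℝ) :
    HasDerivAt (fun t => transverseMode u L (x, t))
      (u x * √(2 / L x) * (π / L x) * cos (π * y / L x)) y := by
  show HasDerivAt (fun t => u x * √(2 / L x) * sin (π * t / L x)) _ y
  refine (((hasDerivAt_id' y).const_mul π).div_const (L x)).sin.const_mul _ |>.congr_deriv ?_
  ring

lemma gradSq_transverseMode (hu : HasDerivAt u u' x) (hL : HasDerivAt L L' x)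
    (hLx : 0 < L x) (y : ℝ) :
    gradSq (transverseMode u L) (x, y) = transverseModeGradSq (u x) u' (L x) L' y := by
  rw [gradSq, (hasDerivAt_transverseMode_fst hu hL hLx y).deriv,
    (hasDerivAt_transverseMode_snd x y).deriv, transverseModeGradSq]
  have hsq := sq_sqrt (div_pos two_pos hLx).le
  linear_combination (((u' - u x * L' / (2 * L x)) * sin (π * y / L x)
        - u x * L' / L x * (π * y / L x) * cos (π * y / L x)) ^ 2
      + (u x * π / L x * cos (π * y / L x)) ^ 2) * hsq

end TransverseMode

lemma integral_transverseModeGradSq (u u' L' : ℝ) {L : ℝ} (hL : 0 < L) :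
    ∫ y in Ioo 0 L, transverseModeGradSq u u' L L' y
      = u' ^ 2 + (π ^ 2 / L ^ 2 + (π ^ 2 / 3 + 1 / 4) * L' ^ 2 / L ^ 2) * u ^ 2 := by
  have hπL : L / π ≠ 0 := (div_pos hL pi_pos).ne'
  have hscale : ∀ y, π * y / L = y / (L / π) := fun y => by field_simp
  rw [← integral_Ioc_eq_integral_Ioo, ← intervalIntegral.integral_of_le hL.le]
  simp only [transverseModeGradSq, hscale]
  rw [intervalIntegral.integral_const_mul, intervalIntegral.integral_comp_div
    (fun t => ((u' - u * L' / (2 * L)) * sin t - u * L' / L * t * cos t) ^ 2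
      + (u * π / L * cos t) ^ 2) hπL, zero_div, div_div_cancel₀ hL.ne',
    integral_sin_sub_mul_cos_sq, smul_eq_mul]
  field_simp
  ring

theorem integral_gradSq_transverseMode {u L : ℝ → ℝ} {c d : ℝ} (hcd : c < d)
    (hu : ContDiffOn ℝ 1 u (Icc c d)) (hL : ContDiffOn ℝ 1 L (Icc c d))
    (hLpos : ∀ x ∈ Icc c d, 0 < L x) :
    ∫ p in regionBetween 0 L (Icc c d), gradSq (transverseMode u L) p
      = (∫ x in Icc c d, deriv u x ^ 2)
        + ∫ x in Icc c d,
            (π ^ 2 / L x ^ 2 + (π ^ 2 / 3 + 1 / 4) * deriv L x ^ 2 / L x ^ 2) * u x ^ 2 := by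
  obtain ⟨U, U', hUc, hU'c, -, hUu, hu'⟩ := hu.exists_continuous_extension_Icc hcd
  obtain ⟨Λ, Λ', hΛc, hΛ'c, hΛrange, hΛL, hL'⟩ := hL.exists_continuous_extension_Icc hcd
  have hΛpos : ∀ x, 0 < Λ x := fun x => by
    obtain ⟨z, hz, hzx⟩ := hΛrange x
    exact hzx ▸ hLpos z hz
  have hΛne : ∀ x, Λ x ≠ 0 := fun x => (hΛpos x).ne'
  set F : ℝ × ℝ → ℝ := fun p => transverseModeGradSq (U p.1) (U' p.1) (Λ p.1) (Λ' p.1) p.2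
  have hF : Continuous F := by
    simp only [F, transverseModeGradSq]
    fun_prop (disch := simp [hΛne])
  have hIoo : ∀ᵐ x : ℝ, x ∈ Icc c d → x ∈ Ioo c d :=
    Ioo_ae_eq_Icc.mem_iff.mono fun x hx => hx.2
  have hae : ∀ᵐ p : ℝ × ℝ,
      p ∈ regionBetween 0 Λ (Icc c d) → gradSq (transverseMode u L) p = F p := by
    filter_upwards [Measure.QuasiMeasurePreserving.ae Measure.quasiMeasurePreserving_fst hIoo]
      with ⟨x, y⟩ hx hp
    rw [gradSq_transverseMode (hu' x (hx hp.1)) (hL' x (hx hp.1)) (hLpos x hp.1) y]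
    simp only [F, hUu hp.1, hΛL hp.1]
  rw [regionBetween_congr (eqOn_refl _ _) hΛL.symm, setIntegral_congr_ae
      (measurableSet_regionBetween measurable_zero hΛc.measurable measurableSet_Icc) hae,
    Measure.volume_eq_prod, setIntegral_regionBetween measurable_zero hΛc.measurable
      measurableSet_Icc (hF.integrableOn_regionBetween_Icc continuousOn_const hΛc.continuousOn)]
  simp only [F, Pi.zero_apply, integral_transverseModeGradSq _ _ _ (hΛpos _)]
  rw [integral_add (by fun_prop : Continuous fun x => U' x ^ 2).integrableOn_Icc
    (Continuous.integrableOn_Icc (by fun_prop (disch := simp [hΛne])))]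
  congr 1 <;> refine setIntegral_congr_ae measurableSet_Icc (hIoo.mono fun x hx hxI => ?_)
  · rw [(hu' x (hx hxI)).deriv]
  · rw [(hL' x (hx hxI)).deriv, hUu hxI, hΛL hxI]

theorem psi_chi_dirichlet_energy_general
    (a b : ℝ) (ha : 0 < a) (hb : 0 < b)
    (h : ℝ → ℝ)
    (hC1 : ContDiffOn ℝ 1 h (Icc (-a) b))
    (hpos : ∀ x ∈ Icc (-a) b, 0 < h x)
    (ε : ℝ) (hε : 0 < ε)
    (χ : ℝ → ℝ) (hχ : ContDiffOn ℝ 1 χ (Icc (-a) b)) :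
    ∫ p in {p : ℝ × ℝ | p.1 ∈ Icc (-a) b ∧ 0 < p.2 ∧ p.2 < ε * h p.1},
        gradSq (fun p : ℝ × ℝ =>
          χ p.1 * Real.sqrt (2 / (ε * h p.1)) * Real.sin (π * p.2 / (ε * h p.1))) p
      = (∫ x in Icc (-a) b, deriv χ x ^ 2) +
        ∫ x in Icc (-a) b,
          (π ^ 2 / (ε ^ 2 * (h x) ^ 2) +
            (π ^ 2 / 3 + 1 / 4) * (deriv h x) ^ 2 / (h x) ^ 2) * χ x ^ 2 := by
  have henergy := integral_gradSq_transverseMode (u := χ) (L := fun x => ε * h x) (by linarith) hχ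
    (contDiffOn_const.mul hC1) fun x hx => mul_pos hε (hpos x hx)
  refine henergy.trans (congrArg _ (setIntegral_congr_fun measurableSet_Icc fun x hx => ?_))
  have hhx := (hpos x hx).ne'
  rw [deriv_const_mul_field']
  field_simp

/-- The Dirichlet-energy identity for `ψ_χ(x,y) = χ(x) √(2/(ε h(x))) sin(π y/(ε h(x)))`:
`∫_{Ω_ε} |∇ψ_χ|² dxdy = ∫_I χ'² dx + ∫_I (π²/(ε²h²) + v) χ² dx`, where
`v = (π²/3 + 1/4) h'²/h²`. -/
theorem psi_chi_dirichlet_energy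
    (a b : ℝ) (ha : 0 < a) (hb : 0 < b)
    (h : ℝ → ℝ)
    (hC1 : ContDiffOn ℝ 1 h (Icc (-a) b))
    (hpos : ∀ x ∈ Icc (-a) b, 0 < h x)
    (ε : ℝ) (hε : 0 < ε)
    (χ : ℝ → ℝ) (hχ : ContDiffOn ℝ 1 χ (Icc (-a) b))
    (hχa : χ (-a) = 0) (hχb : χ b = 0) :
    ∫ p in {p : ℝ × ℝ | p.1 ∈ Icc (-a) b ∧ 0 < p.2 ∧ p.2 < ε * h p.1},
        gradSq (fun p : ℝ × ℝ =>
          χ p.1 * Real.sqrt (2 / (ε * h p.1)) * Real.sin (π * p.2 / (ε * h p.1))) p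
      = (∫ x in Icc (-a) b, deriv χ x ^ 2) +
        ∫ x in Icc (-a) b,
          (π ^ 2 / (ε ^ 2 * (h x) ^ 2) +
            (π ^ 2 / 3 + 1 / 4) * (deriv h x) ^ 2 / (h x) ^ 2) * χ x ^ 2 :=
  psi_chi_dirichlet_energy_general a b ha hb h hC1 hpos ε hε χ hχ
end

section
/- Let A and B be bounded self-adjoint operators on a complex Hilbert space H, and let c > 0, δ ≥ 0. Assume ⟨Aψ, ψ⟩ ≥ c‖ψ‖² and ⟨Bψ, ψ⟩ ≥ c‖ψ‖² for all ψ ∈ H, and |⟨(A − B)ψ₁, ψ₂⟩| ≤ δ ( ⟨Bψ₁, ψ₁⟩ · ⟨Aψ₂, ψ₂⟩ )^{1/2} for all ψ₁, ψ₂ ∈ H. Then A and B are invertible and ‖A⁻¹ − B⁻¹‖ ≤ δ/c. -/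
open RCLike

/-!
The inverses are bounded by `1/c` because both operators are coercive. For the difference, the
resolvent identity `A⁻¹ - B⁻¹ = A⁻¹ (B - A) B⁻¹` and the symmetry of `A⁻¹` give
`⟪(A⁻¹ - B⁻¹) f, g⟫ = -⟪(A - B) B⁻¹ f, A⁻¹ g⟫`. The form bound controls the right-hand side by
`δ (⟪f, B⁻¹ f⟫ ⟪g, A⁻¹ g⟫)^{1/2} ≤ δ ‖f‖ ‖g‖ / c`.
-/

namespace ContinuousLinearMap

variable {𝕜 E : Type*} [RCLike 𝕜] [NormedAddCommGroup E] [InnerProductSpace 𝕜 E]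

local notation "⟪" x ", " y "⟫" => inner 𝕜 x y

theorem opNorm_le_of_norm_inner_le {T : E →L[𝕜] E} {C : ℝ} (hC : 0 ≤ C)
    (h : ∀ x y, ‖⟪T x, y⟫‖ ≤ C * (‖x‖ * ‖y‖)) : ‖T‖ ≤ C :=
  opNorm_le_of_re_inner_le hC fun x y hx hy ↦
    (re_le_norm _).trans <| by simpa [hx, hy] using h x y

theorem apply_ringInverse_apply {A : E →L[𝕜] E} (hA : IsUnit A) (x : E) :
    A (Ring.inverse A x) = x := by
  simpa using congr($(Ring.mul_inverse_cancel A hA) x)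

theorem mul_norm_le_norm_apply_of_coercive {A : E →L[𝕜] E} {c : ℝ}
    (hA : ∀ x, c * ‖x‖ ^ 2 ≤ re ⟪A x, x⟫) (x : E) : c * ‖x‖ ≤ ‖A x‖ := by
  rcases (norm_nonneg x).eq_or_lt with hx | hx
  · simp [← hx]
  · refine le_of_mul_le_mul_right ?_ hx
    calc c * ‖x‖ * ‖x‖ = c * ‖x‖ ^ 2 := by ring
      _ ≤ re ⟪A x, x⟫ := hA x
      _ ≤ ‖A x‖ * ‖x‖ := (re_le_norm _).trans (norm_inner_le_norm _ _)

variable [CompleteSpace E]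

theorem inner_ringInverse_sub_ringInverse_apply {A B : E →L[𝕜] E} (hA : IsSelfAdjoint A)
    (hAu : IsUnit A) (hBu : IsUnit B) (f g : E) :
    ⟪(Ring.inverse A - Ring.inverse B) f, g⟫ =
      -⟪(A - B) (Ring.inverse B f), Ring.inverse A g⟫ := by
  rw [Ring.inverse_sub_inverse (iff_of_true hAu hBu), mul_apply_eq_comp, mul_apply_eq_comp,
    ← inner_neg_left, ← neg_apply, neg_sub]
  exact hA.ringInverse.isSymmetric _ _

section Coercive

variable {A : E →L[𝕜] E} {c : ℝ}

theorem isUnit_of_coercive (hc : 0 < c) (hA : ∀ x, c * ‖x‖ ^ 2 ≤ re ⟪A x, x⟫) : IsUnit A :=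
  isUnit_of_forall_le_norm_inner_map A (c := c.toNNReal) (by simpa using hc) fun x ↦ by
    rw [Real.coe_toNNReal _ hc.le, mul_comm]
    exact (hA x).trans (re_le_norm _)

theorem norm_ringInverse_apply_le_of_coercive (hc : 0 < c)
    (hA : ∀ x, c * ‖x‖ ^ 2 ≤ re ⟪A x, x⟫) (f : E) : ‖Ring.inverse A f‖ ≤ ‖f‖ / c := by
  rw [le_div_iff₀ hc, mul_comm]
  simpa [apply_ringInverse_apply (isUnit_of_coercive hc hA)] using
    mul_norm_le_norm_apply_of_coercive hA (Ring.inverse A f)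

theorem re_inner_apply_ringInverse_le_of_coercive (hc : 0 < c)
    (hA : ∀ x, c * ‖x‖ ^ 2 ≤ re ⟪A x, x⟫) (f : E) :
    re ⟪A (Ring.inverse A f), Ring.inverse A f⟫ ≤ ‖f‖ ^ 2 / c := by
  rw [apply_ringInverse_apply (isUnit_of_coercive hc hA)]
  calc re ⟪f, Ring.inverse A f⟫ ≤ ‖f‖ * ‖Ring.inverse A f‖ :=
        (re_le_norm _).trans (norm_inner_le_norm _ _)
    _ ≤ ‖f‖ * (‖f‖ / c) := by gcongr; exact norm_ringInverse_apply_le_of_coercive hc hA f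
    _ = ‖f‖ ^ 2 / c := by ring

end Coercive

end ContinuousLinearMap

open ContinuousLinearMap in
theorem resolvent_difference_norm_bound_general
    {H : Type*} [NormedAddCommGroup H] [InnerProductSpace ℂ H] [CompleteSpace H]
    (A B : H →L[ℂ] H) (hA : IsSelfAdjoint A)
    (c δ : ℝ) (hc : 0 < c) (hδ : 0 ≤ δ)
    (hAc : ∀ ψ : H, c * ‖ψ‖ ^ 2 ≤ (inner ℂ (A ψ) ψ : ℂ).re)
    (hBc : ∀ ψ : H, c * ‖ψ‖ ^ 2 ≤ (inner ℂ (B ψ) ψ : ℂ).re)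
    (hAB : ∀ ψ₁ ψ₂ : H, ‖(inner ℂ ((A - B) ψ₁) ψ₂ : ℂ)‖ ≤
      δ * Real.sqrt ((inner ℂ (B ψ₁) ψ₁ : ℂ).re * (inner ℂ (A ψ₂) ψ₂ : ℂ).re)) :
    IsUnit A ∧ IsUnit B ∧ ‖Ring.inverse A - Ring.inverse B‖ ≤ δ / c := by
  have hAu := isUnit_of_coercive (A := A) hc hAc
  have hBu := isUnit_of_coercive (A := B) hc hBc
  refine ⟨hAu, hBu, opNorm_le_of_norm_inner_le (by positivity) fun f g ↦ ?_⟩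
  set u := Ring.inverse B f
  set v := Ring.inverse A g
  have hv : 0 ≤ (inner ℂ (A v) v).re := (mul_nonneg hc.le (sq_nonneg _)).trans (hAc v)
  calc ‖inner ℂ ((Ring.inverse A - Ring.inverse B) f) g‖ = ‖inner ℂ ((A - B) u) v‖ := by
        rw [inner_ringInverse_sub_ringInverse_apply hA hAu hBu, norm_neg]
    _ ≤ δ * √((inner ℂ (B u) u).re * (inner ℂ (A v) v).re) := hAB u v
    _ ≤ δ * √(‖f‖ ^ 2 / c * (‖g‖ ^ 2 / c)) := by
        gcongr
        · exact re_inner_apply_ringInverse_le_of_coercive (A := B) hc hBc f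
        · exact re_inner_apply_ringInverse_le_of_coercive (A := A) hc hAc g
    _ = δ / c * (‖f‖ * ‖g‖) := by
        rw [show ‖f‖ ^ 2 / c * (‖g‖ ^ 2 / c) = (‖f‖ * ‖g‖ / c) ^ 2 by ring,
          Real.sqrt_sq (by positivity)]
        ring

/-- **Abstract resolvent comparison** (section 3 of Friedlander–Solomyak). If `A, B`
are bounded self-adjoint operators with `⟨Aψ,ψ⟩ ≥ c‖ψ‖²`, `⟨Bψ,ψ⟩ ≥ c‖ψ‖²` and
`|⟨(A−B)ψ₁,ψ₂⟩| ≤ δ (⟨Bψ₁,ψ₁⟩⟨Aψ₂,ψ₂⟩)^{1/2}`, then `A, B` are invertible and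
`‖A⁻¹ − B⁻¹‖ ≤ δ/c`. -/
theorem resolvent_difference_norm_bound
    {H : Type*} [NormedAddCommGroup H] [InnerProductSpace ℂ H] [CompleteSpace H]
    (A B : H →L[ℂ] H) (hA : IsSelfAdjoint A) (hB : IsSelfAdjoint B)
    (c δ : ℝ) (hc : 0 < c) (hδ : 0 ≤ δ)
    (hAc : ∀ ψ : H, c * ‖ψ‖ ^ 2 ≤ (inner ℂ (A ψ) ψ : ℂ).re)
    (hBc : ∀ ψ : H, c * ‖ψ‖ ^ 2 ≤ (inner ℂ (B ψ) ψ : ℂ).re)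
    (hAB : ∀ ψ₁ ψ₂ : H, ‖(inner ℂ ((A - B) ψ₁) ψ₂ : ℂ)‖ ≤
      δ * Real.sqrt ((inner ℂ (B ψ₁) ψ₁ : ℂ).re * (inner ℂ (A ψ₂) ψ₂ : ℂ).re)) :
    IsUnit A ∧ IsUnit B ∧ ‖Ring.inverse A - Ring.inverse B‖ ≤ δ / c :=
  resolvent_difference_norm_bound_general A B hA c δ hc hδ hAc hBc hAB
end

section
/- Assume additionally that v(x) := (π²/3 + 1/4) h'(x)²/h(x)² is bounded on I \ {0}. Define V_ε(t) := ε^{2α} W_ε(t ε^α) for t ∈ (-a ε^{-α}, b ε^{-α}) \ {0}. Then for every β with 0 < β(m+1) < α and every η > 0 there exists ε(η) > 0 such that |V_ε(t) − q(t)| < η for all ε < ε(η) and all t ≠ 0 with |t| ≤ ε^{-β}. -/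
/-!
Write `M = h 0`. On each side of `0` the expansion of `h` gives `M - h x = c |x|^m + O(|x|^{m+1})`,
which keeps `h x ≥ M / 2` near `0`; a second-order Taylor bound for `y ↦ y⁻²` at `M` then yields
`π² (h(x)⁻² - M⁻²) = q(x) + O(|x|^{m+1})`. The profile `q` is positively homogeneous of degree `m`
and `α (m + 2) = 2`, so at `x = t ε^α` the factor `ε^{2α-2}` turns `q(x)` into exactly `q(t)` and
the error into `O(|t|^{m+1} ε^α) = O(ε^{α - β(m+1)})` on `|t| ≤ ε^{-β}`, while the bounded term
`v` contributes `O(ε^{2α})`.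
-/

open Real Set Filter Topology

theorem abs_inv_sq_sub_taylor_le {M y : ℝ} (hM : 0 < M) (hy : M / 2 ≤ y) :
    |(y ^ 2)⁻¹ - (M ^ 2)⁻¹ - 2 * (M - y) / M ^ 3| ≤ 8 * (M - y) ^ 2 / M ^ 4 := by
  have hy0 : 0 < y := by linarith
  have hid : (y ^ 2)⁻¹ - (M ^ 2)⁻¹ - 2 * (M - y) / M ^ 3
      = (M - y) ^ 2 * ((M + 2 * y) / (y ^ 2 * M ^ 3)) := by
    field_simp
    ring
  have hfac : (M + 2 * y) / (y ^ 2 * M ^ 3) ≤ 8 / M ^ 4 := by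
    rw [div_le_div_iff₀ (by positivity) (by positivity)]
    have : (M + 2 * y) * M ≤ 8 * y ^ 2 := by nlinarith
    nlinarith [mul_le_mul_of_nonneg_right this (pow_nonneg hM.le 3)]
  rw [hid, abs_of_nonneg (by positivity)]
  calc _ ≤ (M - y) ^ 2 * (8 / M ^ 4) := by gcongr
    _ = _ := by ring

theorem abs_inv_sq_sub_inv_sq_sub_le {M y c K s u : ℝ} (hM : 0 < M) (hc : 0 ≤ c) (hK : 0 ≤ K)
    (hs : 0 ≤ s) (hsu : s ≤ u) (hu : u ≤ 1) (hsmall : (c + K) * s ≤ M / 2)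
    (hy : |y - (M - c * s)| ≤ K * (s * u)) :
    |(y ^ 2)⁻¹ - (M ^ 2)⁻¹ - 2 * c * s / M ^ 3|
      ≤ (2 * K / M ^ 3 + 8 * (c + K) ^ 2 / M ^ 4) * (s * u) := by
  have hKsu : K * (s * u) ≤ K * s := mul_le_mul_of_nonneg_left (by nlinarith) hK
  have hD : |M - y| ≤ (c + K) * s := by
    rw [abs_le] at hy ⊢
    constructor <;> nlinarith
  have hD2 : (M - y) ^ 2 ≤ (c + K) ^ 2 * (s * u) := by
    calc (M - y) ^ 2 = |M - y| ^ 2 := (sq_abs _).symm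
      _ ≤ ((c + K) * s) ^ 2 := pow_le_pow_left₀ (abs_nonneg _) hD 2
      _ = (c + K) ^ 2 * (s * s) := by ring
      _ ≤ (c + K) ^ 2 * (s * u) := by gcongr
  have hy2 : M / 2 ≤ y := by linarith [(abs_le.mp hD).2]
  calc |(y ^ 2)⁻¹ - (M ^ 2)⁻¹ - 2 * c * s / M ^ 3|
      = |((y ^ 2)⁻¹ - (M ^ 2)⁻¹ - 2 * (M - y) / M ^ 3) - 2 * (y - (M - c * s)) / M ^ 3| := by
        ring_nf
    _ ≤ 8 * (M - y) ^ 2 / M ^ 4 + 2 * |y - (M - c * s)| / M ^ 3 := by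
        refine (abs_sub _ _).trans (add_le_add (abs_inv_sq_sub_taylor_le hM hy2) ?_)
        rw [abs_div, abs_mul, abs_two, abs_of_pos (by positivity : (0:ℝ) < M ^ 3)]
    _ ≤ 8 * ((c + K) ^ 2 * (s * u)) / M ^ 4 + 2 * (K * (s * u)) / M ^ 3 := by gcongr
    _ = (2 * K / M ^ 3 + 8 * (c + K) ^ 2 / M ^ 4) * (s * u) := by ring

theorem exists_inv_sq_expansion {h q : ℝ → ℝ} {m cp cm K η₀ : ℝ} (hM : 0 < h 0) (hm : 1 ≤ m)
    (hcp : 0 ≤ cp) (hcm : 0 ≤ cm) (hK : 0 < K) (hη₀ : 0 < η₀)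
    (hexp_pos : ∀ x : ℝ, 0 < x → x ≤ η₀ → |h x - (h 0 - cp * x ^ m)| ≤ K * x ^ (m + 1))
    (hexp_neg : ∀ x : ℝ, -η₀ ≤ x → x < 0 →
      |h x - (h 0 - cm * |x| ^ m)| ≤ K * |x| ^ (m + 1))
    (hq_pos : ∀ t : ℝ, 0 < t → q t = 2 * π ^ 2 * cp * t ^ m / (h 0) ^ 3)
    (hq_neg : ∀ t : ℝ, t ≤ 0 → q t = 2 * π ^ 2 * cm * |t| ^ m / (h 0) ^ 3) :
    ∃ r > 0, ∃ C, 0 ≤ C ∧ ∀ x, x ≠ 0 → |x| ≤ r →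
      |π ^ 2 * ((h x ^ 2)⁻¹ - (h 0 ^ 2)⁻¹) - q x| ≤ C * |x| ^ (m + 1) := by
  set M := h 0
  set c := max cp cm
  have hc : 0 ≤ c := hcp.trans (le_max_left _ _)
  refine ⟨min (min 1 η₀) (M / (2 * (c + K))), by positivity,
    π ^ 2 * (2 * K / M ^ 3 + 8 * (c + K) ^ 2 / M ^ 4), by positivity, fun x hx hxr => ?_⟩
  have hu : 0 < |x| := abs_pos.mpr hx
  have hu1 : |x| ≤ 1 := hxr.trans ((min_le_left _ _).trans (min_le_left _ _))
  have huη : |x| ≤ η₀ := hxr.trans ((min_le_left _ _).trans (min_le_right _ _))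
  have hsu : |x| ^ m ≤ |x| := rpow_le_self_of_le_one hu.le hu1 hm
  have hpow : |x| ^ (m + 1) = |x| ^ m * |x| := rpow_add_one hu.ne' m
  obtain ⟨c', hc'0, hc'c, hq, hexp⟩ : ∃ c', 0 ≤ c' ∧ c' ≤ c ∧
      q x = 2 * π ^ 2 * c' * |x| ^ m / M ^ 3 ∧ |h x - (M - c' * |x| ^ m)| ≤ K * |x| ^ (m + 1) := by
    rcases hx.lt_or_gt with hneg | hpos
    · exact ⟨cm, hcm, le_max_right _ _, hq_neg x hneg.le,
        hexp_neg x (by linarith [neg_abs_le x]) hneg⟩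
    · rw [abs_of_pos hpos] at huη ⊢
      exact ⟨cp, hcp, le_max_left _ _, hq_pos x hpos, hexp_pos x hpos huη⟩
  rw [hpow] at hexp
  have hsmall : (c' + K) * |x| ^ m ≤ M / 2 :=
    calc (c' + K) * |x| ^ m ≤ (c + K) * (M / (2 * (c + K))) := by
          gcongr
          exact hsu.trans (hxr.trans (min_le_right _ _))
      _ = M / 2 := by field_simp
  calc |π ^ 2 * ((h x ^ 2)⁻¹ - (M ^ 2)⁻¹) - q x|
      = |π ^ 2 * ((h x ^ 2)⁻¹ - (M ^ 2)⁻¹ - 2 * c' * |x| ^ m / M ^ 3)| := by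
        rw [hq]
        ring_nf
    _ = π ^ 2 * |(h x ^ 2)⁻¹ - (M ^ 2)⁻¹ - 2 * c' * |x| ^ m / M ^ 3| := by
        rw [abs_mul, abs_of_pos (by positivity)]
    _ ≤ π ^ 2 * ((2 * K / M ^ 3 + 8 * (c' + K) ^ 2 / M ^ 4) * (|x| ^ m * |x|)) := by
        gcongr
        exact abs_inv_sq_sub_inv_sq_sub_le hM hc'0 hK.le (by positivity) hsu hu1 hsmall hexp
    _ ≤ π ^ 2 * (2 * K / M ^ 3 + 8 * (c + K) ^ 2 / M ^ 4) * |x| ^ (m + 1) := by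
        rw [hpow, mul_assoc]
        gcongr

theorem two_sided_power_mul_right {q : ℝ → ℝ} {A B m l t : ℝ}
    (hq_pos : ∀ t, 0 < t → q t = A * t ^ m) (hq_neg : ∀ t, t ≤ 0 → q t = B * |t| ^ m)
    (hl : 0 < l) : q (t * l) = l ^ m * q t := by
  rcases le_or_gt t 0 with ht | ht
  · rw [hq_neg _ (mul_nonpos_of_nonpos_of_nonneg ht hl.le), hq_neg t ht, abs_mul,
      abs_of_pos hl, mul_rpow (abs_nonneg t) hl.le]
    ring
  · rw [hq_pos _ (mul_pos ht hl), hq_pos t ht, mul_rpow ht.le hl.le]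
    ring

theorem abs_rescaled_sub_le {q : ℝ → ℝ} {p w m α β C Cv ε t : ℝ} (hε : 0 < ε)
    (hα : α * (m + 2) = 2) (hm : 0 ≤ m + 1) (hC : 0 ≤ C)
    (hq : q (t * ε ^ α) = (ε ^ α) ^ m * q t)
    (hp : |p - q (t * ε ^ α)| ≤ C * |t * ε ^ α| ^ (m + 1)) (hw : |w| ≤ Cv)
    (ht : |t| ≤ ε ^ (-β)) :
    |ε ^ (2 * α) * (p / ε ^ 2 + w) - q t| ≤ C * ε ^ (α - β * (m + 1)) + Cv * ε ^ (2 * α) := by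
  have hεα : 0 < ε ^ α := rpow_pos_of_pos hε α
  have hscale : ε ^ (2 * α) * ε ^ (α * m) = ε ^ 2 := by
    rw [← rpow_add hε, ← rpow_natCast]
    congr 1
    push_cast
    linarith
  have hscale' : ε ^ (2 * α) / ε ^ 2 * ε ^ (α * (m + 1)) = ε ^ α := by
    rw [mul_add, mul_one, rpow_add hε, ← mul_assoc, div_mul_eq_mul_div, hscale,
      div_self (by positivity), one_mul]
  have hqt : q t = ε ^ (2 * α) / ε ^ 2 * q (t * ε ^ α) := by
    rw [hq, ← rpow_mul hε.le, ← mul_assoc, div_mul_eq_mul_div, hscale, div_self (by positivity),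
      one_mul]
  have hx : |t * ε ^ α| ^ (m + 1) = |t| ^ (m + 1) * ε ^ (α * (m + 1)) := by
    rw [abs_mul, abs_of_pos hεα, mul_rpow (abs_nonneg t) hεα.le, ← rpow_mul hε.le]
  have ht' : |t| ^ (m + 1) ≤ ε ^ (-β * (m + 1)) := by
    rw [rpow_mul hε.le]
    exact rpow_le_rpow (abs_nonneg t) ht hm
  calc |ε ^ (2 * α) * (p / ε ^ 2 + w) - q t|
      = |ε ^ (2 * α) / ε ^ 2 * (p - q (t * ε ^ α)) + ε ^ (2 * α) * w| := by
        rw [hqt]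
        ring_nf
    _ ≤ ε ^ (2 * α) / ε ^ 2 * (C * |t * ε ^ α| ^ (m + 1)) + ε ^ (2 * α) * Cv := by
        refine (abs_add_le _ _).trans (add_le_add ?_ ?_) <;>
          rw [abs_mul, abs_of_pos (by positivity)] <;> gcongr
    _ = C * |t| ^ (m + 1) * ε ^ α + Cv * ε ^ (2 * α) := by
        rw [hx, ← hscale']
        ring
    _ ≤ C * ε ^ (-β * (m + 1)) * ε ^ α + Cv * ε ^ (2 * α) := by gcongr
    _ = C * ε ^ (α - β * (m + 1)) + Cv * ε ^ (2 * α) := by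
        rw [mul_assoc, ← rpow_add hε]
        ring_nf

theorem abs_mul_rpow_le_rpow_sub {t ε α β : ℝ} (hε : 0 < ε) (ht : |t| ≤ ε ^ (-β)) :
    |t * ε ^ α| ≤ ε ^ (α - β) :=
  calc |t * ε ^ α| = |t| * ε ^ α := by rw [abs_mul, abs_of_pos (rpow_pos_of_pos hε α)]
    _ ≤ ε ^ (-β) * ε ^ α := by gcongr
    _ = ε ^ (α - β) := by rw [← rpow_add hε]; ring_nf

theorem tendsto_rpow_nhds_zero {p : ℝ} (hp : 0 < p) :
    Tendsto (fun x : ℝ => x ^ p) (𝓝 0) (𝓝 0) := by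
  simpa [zero_rpow hp.ne'] using (continuousAt_rpow_const 0 p (Or.inr hp.le)).tendsto

theorem tendsto_mul_rpow_add_mul_rpow_nhds_zero {A B p r : ℝ} (hp : 0 < p) (hr : 0 < r) :
    Tendsto (fun x : ℝ => A * x ^ p + B * x ^ r) (𝓝 0) (𝓝 0) := by
  simpa using ((tendsto_rpow_nhds_zero hp).const_mul A).add
    ((tendsto_rpow_nhds_zero hr).const_mul B)

theorem rescaled_potential_uniform_convergence_general
    (a b : ℝ) (ha : 0 < a) (hb : 0 < b)
    (h : ℝ → ℝ)
    (hpos : ∀ x ∈ Icc (-a) b, 0 < h x)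
    (m cp cm K η₀ : ℝ)
    (hm : 1 ≤ m) (hcp : 0 < cp) (hcm : 0 < cm) (hK : 0 < K) (hη₀ : 0 < η₀)
    (hexp_pos : ∀ x : ℝ, 0 < x → x ≤ η₀ →
      |h x - (h 0 - cp * x ^ m)| ≤ K * x ^ (m + 1))
    (hexp_neg : ∀ x : ℝ, -η₀ ≤ x → x < 0 →
      |h x - (h 0 - cm * |x| ^ m)| ≤ K * |x| ^ (m + 1))
    (α : ℝ) (hα : α = 2 / (m + 2))
    (Cv : ℝ)
    (hv : ∀ x ∈ Icc (-a) b \ {(0 : ℝ)},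
      (π ^ 2 / 3 + 1 / 4) * (deriv h x) ^ 2 / (h x) ^ 2 ≤ Cv)
    (q : ℝ → ℝ)
    (hq_pos : ∀ t : ℝ, 0 < t → q t = 2 * π ^ 2 * cp * t ^ m / (h 0) ^ 3)
    (hq_neg : ∀ t : ℝ, t ≤ 0 → q t = 2 * π ^ 2 * cm * |t| ^ m / (h 0) ^ 3)
    (β : ℝ) (hβα : β * (m + 1) < α) :
    ∀ η : ℝ, 0 < η → ∃ εη : ℝ, 0 < εη ∧ ∀ ε : ℝ, 0 < ε → ε < εη →
      ∀ t : ℝ, t ≠ 0 → |t| ≤ ε ^ (-β) →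
        |ε ^ (2 * α) *
            (π ^ 2 / ε ^ 2 * (((h (t * ε ^ α)) ^ 2)⁻¹ - ((h 0) ^ 2)⁻¹) +
              (π ^ 2 / 3 + 1 / 4) * (deriv h (t * ε ^ α)) ^ 2 / (h (t * ε ^ α)) ^ 2)
          - q t| < η := by
  intro η hη
  have hM : 0 < h 0 := hpos 0 ⟨by linarith, hb.le⟩
  obtain ⟨r, hr, C, hC, hexp⟩ :=
    exists_inv_sq_expansion hM hm hcp.le hcm.le hK hη₀ hexp_pos hexp_neg hq_pos hq_neg
  have hq_hom : ∀ t l, 0 < l → q (t * l) = l ^ m * q t := fun t l hl =>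
    two_sided_power_mul_right (A := 2 * π ^ 2 * cp / h 0 ^ 3) (B := 2 * π ^ 2 * cm / h 0 ^ 3)
      (fun t ht => by rw [hq_pos t ht]; ring) (fun t ht => by rw [hq_neg t ht]; ring) hl
  have hα0 : 0 < α := by rw [hα]; positivity
  have hαm : α * (m + 2) = 2 := by rw [hα]; field_simp
  have hβ_lt_α : β < α := by rcases le_or_gt 0 β with hβ | hβ <;> nlinarith
  obtain ⟨δ, hδ, hδsmall⟩ := Metric.eventually_nhds_iff.mp <|
    ((tendsto_rpow_nhds_zero (sub_pos.2 hβ_lt_α)).eventually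
        (gt_mem_nhds (lt_min hr (lt_min ha hb)))).and
      ((tendsto_mul_rpow_add_mul_rpow_nhds_zero (A := C) (B := Cv) (sub_pos.2 hβα)
        (by positivity : 0 < 2 * α)).eventually (gt_mem_nhds hη))
  refine ⟨δ, hδ, fun ε hε hεδ t ht htε => ?_⟩
  obtain ⟨hεr, hεη⟩ := hδsmall (by rwa [Real.dist_eq, sub_zero, abs_of_pos hε])
  have hxr := (abs_mul_rpow_le_rpow_sub (α := α) hε htε).trans hεr.le
  have hx0 : t * ε ^ α ≠ 0 := mul_ne_zero ht (rpow_pos_of_pos hε α).ne'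
  have hxI : t * ε ^ α ∈ Icc (-a) b \ {0} :=
    ⟨Icc_subset_Icc (neg_le_neg (min_le_left a b)) (min_le_right a b)
      (abs_le.mp (hxr.trans (min_le_right _ _))), hx0⟩
  rw [div_mul_eq_mul_div]
  exact (abs_rescaled_sub_le hε hαm (by linarith) hC (hq_hom t _ (rpow_pos_of_pos hε α))
    (hexp _ hx0 (hxr.trans (min_le_left _ _)))
    ((abs_of_nonneg (by positivity)).trans_le (hv _ hxI)) htε).trans_lt hεη

/-- **Estimate (4.4)** (Friedlander–Solomyak). For the rescaled potential
`V_ε(t) = ε^{2α} W_ε(t ε^α)` and any `β` with `0 < β` and `β(m+1) < α`: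
for any `η > 0` there is `ε(η) > 0` so that `|V_ε(t) − q(t)| < η` for all
`ε < ε(η)` and all `t ≠ 0` with `|t| ≤ ε^{-β}`. -/
theorem rescaled_potential_uniform_convergence
    (a b : ℝ) (ha : 0 < a) (hb : 0 < b)
    (h : ℝ → ℝ)
    (hcont : ContinuousOn h (Icc (-a) b))
    (hpos : ∀ x ∈ Icc (-a) b, 0 < h x)
    (hmax : ∀ x ∈ Icc (-a) b, x ≠ 0 → h x < h 0)
    (hC1 : ContDiffOn ℝ 1 h (Icc (-a) b \ {0}))
    (m cp cm K η₀ : ℝ)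
    (hm : 1 ≤ m) (hcp : 0 < cp) (hcm : 0 < cm) (hK : 0 < K) (hη₀ : 0 < η₀)
    (hexp_pos : ∀ x : ℝ, 0 < x → x ≤ η₀ →
      |h x - (h 0 - cp * x ^ m)| ≤ K * x ^ (m + 1))
    (hexp_neg : ∀ x : ℝ, -η₀ ≤ x → x < 0 →
      |h x - (h 0 - cm * |x| ^ m)| ≤ K * |x| ^ (m + 1))
    (α : ℝ) (hα : α = 2 / (m + 2))
    (Cv : ℝ)
    (hv : ∀ x ∈ Icc (-a) b \ {(0 : ℝ)},
      (π ^ 2 / 3 + 1 / 4) * (deriv h x) ^ 2 / (h x) ^ 2 ≤ Cv)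
    (q : ℝ → ℝ)
    (hq_pos : ∀ t : ℝ, 0 < t → q t = 2 * π ^ 2 * cp * t ^ m / (h 0) ^ 3)
    (hq_neg : ∀ t : ℝ, t ≤ 0 → q t = 2 * π ^ 2 * cm * |t| ^ m / (h 0) ^ 3)
    (β : ℝ) (hβ : 0 < β) (hβα : β * (m + 1) < α) :
    ∀ η : ℝ, 0 < η → ∃ εη : ℝ, 0 < εη ∧ ∀ ε : ℝ, 0 < ε → ε < εη →
      ∀ t : ℝ, t ≠ 0 → |t| ≤ ε ^ (-β) →
        |ε ^ (2 * α) *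
            (π ^ 2 / ε ^ 2 * (((h (t * ε ^ α)) ^ 2)⁻¹ - ((h 0) ^ 2)⁻¹) +
              (π ^ 2 / 3 + 1 / 4) * (deriv h (t * ε ^ α)) ^ 2 / (h (t * ε ^ α)) ^ 2)
          - q t| < η :=
  rescaled_potential_uniform_convergence_general a b ha hb h hpos m cp cm K η₀ hm hcp hcm hK hη₀
    hexp_pos hexp_neg α hα Cv hv q hq_pos hq_neg β hβα
end

section
/- Let e and f be unit vectors in a complex Hilbert space H and define the operator K : H → H by Kψ := ⟨ψ, e⟩ e − ⟨ψ, f⟩ f. Then for every Hilbert (orthonormal) basis (b_i)_{i∈ι} of H one has ∑_{i∈ι} ‖K b_i‖² = 2 ( 1 − |⟨e, f⟩|² ); in other words, the squared Hilbert–Schmidt norm of K equals 2(1 − |⟨e,f⟩|²). -/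
/-!
Expanding the square, `‖⟪e, bᵢ⟫ e - ⟪f, bᵢ⟫ f‖²` is a combination of the products
`⟪x, bᵢ⟫ ⟪bᵢ, y⟫` with `x, y ∈ {e, f}`, and Parseval's identity sums each of these to `⟪x, y⟫`.
-/

section

open RCLike ComplexConjugate

open scoped InnerProductSpace

variable {𝕜 H : Type*} [RCLike 𝕜] [NormedAddCommGroup H] [InnerProductSpace 𝕜 H]

theorem norm_smul_sub_smul_sq_eq (a c : 𝕜) (x y : H) :
    ((‖a • x - c • y‖ ^ 2 : ℝ) : 𝕜) =
      conj a * a * ⟪x, x⟫_𝕜 + conj c * c * ⟪y, y⟫_𝕜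
        - conj a * c * ⟪x, y⟫_𝕜 - conj c * a * ⟪y, x⟫_𝕜 := by
  rw [ofReal_pow, ← inner_self_eq_norm_sq_to_K]
  simp only [inner_sub_left, inner_sub_right, inner_smul_left, inner_smul_right]
  ring

theorem HilbertBasis.hasSum_norm_inner_smul_sub_inner_smul_sq {ι : Type*}
    (b : HilbertBasis ι 𝕜 H) (x y : H) :
    HasSum (fun i ↦ ‖⟪x, b i⟫_𝕜 • x - ⟪y, b i⟫_𝕜 • y‖ ^ 2)
      (‖x‖ ^ 4 + ‖y‖ ^ 4 - 2 * ‖⟪x, y⟫_𝕜‖ ^ 2) := by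
  have hparseval := ((((b.hasSum_inner_mul_inner x x).mul_right ⟪x, x⟫_𝕜).add
    ((b.hasSum_inner_mul_inner y y).mul_right ⟪y, y⟫_𝕜)).sub
    ((b.hasSum_inner_mul_inner y x).mul_right ⟪x, y⟫_𝕜)).sub
    ((b.hasSum_inner_mul_inner x y).mul_right ⟪y, x⟫_𝕜)
  have hlimit : ((‖x‖ ^ 4 + ‖y‖ ^ 4 - 2 * ‖⟪x, y⟫_𝕜‖ ^ 2 : ℝ) : 𝕜) =
      ⟪x, x⟫_𝕜 * ⟪x, x⟫_𝕜 + ⟪y, y⟫_𝕜 * ⟪y, y⟫_𝕜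
        - ⟪y, x⟫_𝕜 * ⟪x, y⟫_𝕜 - ⟪x, y⟫_𝕜 * ⟪y, x⟫_𝕜 := by
    rw [← inner_conj_symm y x, RCLike.conj_mul, RCLike.mul_conj, inner_self_eq_norm_sq_to_K,
      inner_self_eq_norm_sq_to_K]
    push_cast
    ring
  rw [← hasSum_ofReal 𝕜, hlimit]
  refine hparseval.congr_fun fun i ↦ ?_
  rw [norm_smul_sub_smul_sq_eq, inner_conj_symm, inner_conj_symm]
  ring

end

theorem hilbert_schmidt_norm_difference_rank_one_projections_general
    {H : Type*} [NormedAddCommGroup H] [InnerProductSpace ℂ H]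
    (e f : H) (he : ‖e‖ = 1) (hf : ‖f‖ = 1)
    {ι : Type*} (b : HilbertBasis ι ℂ H) :
    ∑' i : ι, ‖(inner ℂ e (b i) : ℂ) • e - (inner ℂ f (b i) : ℂ) • f‖ ^ 2
      = 2 * (1 - ‖(inner ℂ e f : ℂ)‖ ^ 2) := by
  rw [(b.hasSum_norm_inner_smul_sub_inner_smul_sq e f).tsum_eq, he, hf]
  ring

/-- **Identity (5.2)** (Friedlander–Solomyak). For unit vectors `e, f` in a complex
Hilbert space, the squared Hilbert–Schmidt norm of the difference
`K = (·,e)e − (·,f)f` of the rank-one projections is `2(1 − |⟨e,f⟩|²)`: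
for every Hilbert basis `(b_i)`, `∑_i ‖K b_i‖² = 2(1 − |⟨e,f⟩|²)`. -/
theorem hilbert_schmidt_norm_difference_rank_one_projections
    {H : Type*} [NormedAddCommGroup H] [InnerProductSpace ℂ H] [CompleteSpace H]
    (e f : H) (he : ‖e‖ = 1) (hf : ‖f‖ = 1)
    {ι : Type*} (b : HilbertBasis ι ℂ H) :
    ∑' i : ι, ‖(inner ℂ e (b i) : ℂ) • e - (inner ℂ f (b i) : ℂ) • f‖ ^ 2
      = 2 * (1 - ‖(inner ℂ e f : ℂ)‖ ^ 2) :=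
  hilbert_schmidt_norm_difference_rank_one_projections_general e f he hf b
end

section
/- Let S be a bounded self-adjoint operator on a complex Hilbert space H, let λ₀ ∈ ℝ and let e be a unit vector with S e = λ₀ e. Assume the eigenspace ker(S − λ₀) is one-dimensional and that there is an open set δ ⊆ ℝ with spectrum(S) ∩ δ = {λ₀}. Let φ : ℝ → ℝ be continuous with φ(t) = 0 for every t ∈ ℝ \ δ and φ(λ₀) = 1. Then the operator φ(S), given by the continuous functional calculus, equals the rank-one orthogonal projection ψ ↦ ⟨ψ, e⟩ e. -/
/-!
On `σ(S)` the function `φ` is the indicator of `{λ₀}`. Hence `φ(S)` is self-adjoint with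
spectrum `φ(σ(S)) ⊆ {0, 1}`, i.e. an orthogonal projection; it is nonzero since
`1 = φ(λ₀) ∈ σ(φ(S))`; and `S φ(S) = λ₀ φ(S)` because `t φ(t) = λ₀ φ(t)` on `σ(S)`. So `φ(S)`
projects onto a nonzero subspace of the line `ker (S - λ₀) = ℂ e`, that is, onto `ℂ e`.
-/

theorem Submodule.eq_span_singleton_of_le_of_ne_bot {K V : Type*} [DivisionRing K]
    [AddCommGroup V] [Module K V] {U : Submodule K V} {e : V} (hUe : U ≤ K ∙ e) (hU : U ≠ ⊥) :
    U = K ∙ e := by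
  obtain ⟨v, hvU, hv0⟩ := U.exists_mem_ne_zero_of_ne_bot hU
  obtain ⟨c, rfl⟩ := mem_span_singleton.mp (hUe hvU)
  have hc : c ≠ 0 := by rintro rfl; simp at hv0
  refine le_antisymm hUe (span_singleton_le_iff_mem _ _ |>.mpr ?_)
  simpa [smul_smul, hc] using U.smul_mem c⁻¹ hvU

section SelfAdjointCFC

variable {A : Type*} [TopologicalSpace A] [Ring A] [StarRing A] [Algebra ℝ A]
  [ContinuousFunctionalCalculus ℝ A IsSelfAdjoint] {f : ℝ → ℝ} {a : A}

theorem isStarProjection_cfc_of_image_subset (hf : ContinuousOn f (spectrum ℝ a))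
    (ha : IsSelfAdjoint a) (h01 : f '' spectrum ℝ a ⊆ {0, 1}) : IsStarProjection (cfc f a) :=
  isStarProjection_iff_spectrum_subset_and_isSelfAdjoint.mpr
    ⟨cfc_map_spectrum f a ▸ h01, cfc_predicate f a⟩

theorem cfc_ne_zero_of_mem_spectrum {x : ℝ} (hf : ContinuousOn f (spectrum ℝ a))
    (ha : IsSelfAdjoint a) (hx : x ∈ spectrum ℝ a) (hfx : f x ≠ 0) : cfc f a ≠ 0 := by
  intro h
  have hfx_mem : f x ∈ spectrum ℝ (cfc f a) := cfc_map_spectrum f a ▸ Set.mem_image_of_mem f hx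
  rw [h, spectrum.mem_iff, sub_zero] at hfx_mem
  exact hfx_mem ((isUnit_iff_ne_zero.mpr hfx).map (algebraMap ℝ A))

theorem mul_cfc_eq_smul_of_eq_zero_of_ne {x : ℝ} (hf : ContinuousOn f (spectrum ℝ a))
    (ha : IsSelfAdjoint a) (hsupp : ∀ t ∈ spectrum ℝ a, t ≠ x → f t = 0) :
    a * cfc f a = x • cfc f a :=
  calc a * cfc f a = cfc (fun t ↦ t * f t) a := by rw [cfc_mul (fun t ↦ t) f a, cfc_id' ℝ a]
    _ = cfc (fun t ↦ x * f t) a := cfc_congr fun t ht ↦ by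
        rcases eq_or_ne t x with rfl | hne
        · rfl
        · simp [hsupp t ht hne]
    _ = x • cfc f a := cfc_const_mul x f a

end SelfAdjointCFC

theorem IsStarProjection.eq_starProjection_span_singleton {𝕜 E : Type*} [RCLike 𝕜]
    [NormedAddCommGroup E] [InnerProductSpace 𝕜 E] [CompleteSpace E] {p : E →L[𝕜] E} {e : E}
    (hp : IsStarProjection p) (hp0 : p ≠ 0) (hpe : (p : E →ₗ[𝕜] E).range ≤ 𝕜 ∙ e) :
    p = (𝕜 ∙ e).starProjection := by
  refine ContinuousLinearMap.IsStarProjection.ext hp isStarProjection_starProjection ?_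
  rw [Submodule.range_starProjection]
  refine Submodule.eq_span_singleton_of_le_of_ne_bot hpe ?_
  rwa [ne_eq, LinearMap.range_eq_bot, ← ContinuousLinearMap.toLinearMap_zero,
    ContinuousLinearMap.coe_inj]

theorem cfc_isolated_simple_eigenvalue_projection_general
    {H : Type*} [NormedAddCommGroup H] [InnerProductSpace ℂ H] [CompleteSpace H]
    (S : H →L[ℂ] H) (hS : IsSelfAdjoint S)
    (lam : ℝ) (e : H) (he : ‖e‖ = 1)
    (heig : S e = (lam : ℂ) • e)
    (hsimple :
      Module.finrank ℂ (LinearMap.ker ((S - (lam : ℂ) • (1 : H →L[ℂ] H) : H →L[ℂ] H) : H →ₗ[ℂ] H)) = 1)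
    (δ : Set ℝ)
    (hspec : spectrum ℝ S ∩ δ = {lam})
    (φ : ℝ → ℝ) (hφ : Continuous φ)
    (hφ0 : ∀ t : ℝ, t ∉ δ → φ t = 0) (hφ1 : φ lam = 1) :
    ∀ ψ : H, (cfc φ S) ψ = (inner ℂ e ψ : ℂ) • e := by
  have hlam : lam ∈ spectrum ℝ S := (hspec.symm ▸ rfl : lam ∈ spectrum ℝ S ∩ δ).1
  have hsupp (t : ℝ) (ht : t ∈ spectrum ℝ S) (hne : t ≠ lam) : φ t = 0 :=
    hφ0 t fun htδ ↦ hne (hspec ▸ ⟨ht, htδ⟩ : t ∈ ({lam} : Set ℝ))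
  have hP : IsStarProjection (cfc φ S) := by
    refine isStarProjection_cfc_of_image_subset hφ.continuousOn hS ?_
    rintro _ ⟨t, ht, rfl⟩
    rcases eq_or_ne t lam with rfl | hne
    · simp [hφ1]
    · simp [hsupp t ht hne]
  have hP0 : cfc φ S ≠ 0 :=
    cfc_ne_zero_of_mem_spectrum hφ.continuousOn hS hlam (hφ1 ▸ one_ne_zero)
  have hker : LinearMap.ker ((S - (lam : ℂ) • (1 : H →L[ℂ] H) : H →L[ℂ] H) : H →ₗ[ℂ] H) = ℂ ∙ e :=
    eq_span_singleton_of_mem_of_finrank_eq_one hsimple (by simp [heig])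
      (norm_ne_zero_iff.mp (he ▸ one_ne_zero))
  have hrange : ((cfc φ S : H →L[ℂ] H) : H →ₗ[ℂ] H).range ≤ ℂ ∙ e := by
    rw [← hker, LinearMap.range_le_ker_iff, ← ContinuousLinearMap.toLinearMap_comp,
      ← ContinuousLinearMap.mul_def, sub_mul,
      mul_cfc_eq_smul_of_eq_zero_of_ne hφ.continuousOn hS hsupp, smul_mul_assoc, one_mul,
      Complex.coe_smul, sub_self, ContinuousLinearMap.toLinearMap_zero]
  intro ψ
  rw [hP.eq_starProjection_span_singleton hP0 hrange,
    Submodule.starProjection_unit_singleton ℂ he]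

/-- **Spectral projection via functional calculus** (section 5 of
Friedlander–Solomyak). If `λ₀` is a simple eigenvalue of the bounded self-adjoint
operator `S`, isolated in the spectrum by an open set `δ` with
`spectrum(S) ∩ δ = {λ₀}`, and `φ` is continuous, vanishes off `δ` and `φ(λ₀) = 1`,
then `φ(S)` is the rank-one projection `ψ ↦ ⟨ψ,e⟩e` onto the eigenvector `e`. -/
theorem cfc_isolated_simple_eigenvalue_projection
    {H : Type*} [NormedAddCommGroup H] [InnerProductSpace ℂ H] [CompleteSpace H]
    (S : H →L[ℂ] H) (hS : IsSelfAdjoint S)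
    (lam : ℝ) (e : H) (he : ‖e‖ = 1)
    (heig : S e = (lam : ℂ) • e)
    (hsimple :
      Module.finrank ℂ (LinearMap.ker ((S - (lam : ℂ) • (1 : H →L[ℂ] H) : H →L[ℂ] H) : H →ₗ[ℂ] H)) = 1)
    (δ : Set ℝ) (hδ : IsOpen δ)
    (hspec : spectrum ℝ S ∩ δ = {lam})
    (φ : ℝ → ℝ) (hφ : Continuous φ)
    (hφ0 : ∀ t : ℝ, t ∉ δ → φ t = 0) (hφ1 : φ lam = 1) :
    ∀ ψ : H, (cfc φ S) ψ = (inner ℂ e ψ : ℂ) • e :=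
  cfc_isolated_simple_eigenvalue_projection_general S hS lam e he heig hsimple δ hspec φ hφ hφ0 hφ1
end
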